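/- arXiv:1711.07743 — 5 statements merged into one kernel-verified Lean document; each statement's English description precedes it below -/
import Mathlib

section
/- Let 0 < l* ≤ π/6. Define f(x) = (l*/√3)x² sin(l*x) + l*x cos(l*x) - sin(l*x) for x ∈ [0,1]. Then f'(x) = l*x sin(l*x)[2/√3 - l* + (1/√3) l*x cot(l*x)] > 0 for 0 < x ≤ 1, and consequently f(x) > 0 for 0 < x ≤ 1. -/
open Real

private lemma aux_deriv (l : ℝ) : ∀ y : ℝ,
    HasDerivAt (fun y : ℝ =>
        (l / Real.sqrt 3) * y ^ 2 * Real.sin (l * y) + l * y * Real.cos (l * y)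
          - Real.sin (l * y))
      ((l / Real.sqrt 3) * (2 * y) * Real.sin (l * y)
        + (l / Real.sqrt 3) * y ^ 2 * (Real.cos (l * y) * l)
        + (l * Real.cos (l * y) + l * y * (-Real.sin (l * y) * l))
        - Real.cos (l * y) * l) y := by
  intro y
  have hly : HasDerivAt (fun y : ℝ => l * y) l y := by
    simpa using (hasDerivAt_id y).const_mul l
  have hsin : HasDerivAt (fun y : ℝ => Real.sin (l * y)) (Real.cos (l * y) * l) y :=
    (Real.hasDerivAt_sin (l * y)).comp y hly
  have hcos : HasDerivAt (fun y : ℝ => Real.cos (l * y)) (-Real.sin (l * y) * l) y :=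
    (Real.hasDerivAt_cos (l * y)).comp y hly
  have h1 : HasDerivAt (fun y : ℝ => (l / Real.sqrt 3) * y ^ 2)
      ((l / Real.sqrt 3) * (2 * y)) y := by
    simpa using ((hasDerivAt_pow 2 y).const_mul (l / Real.sqrt 3))
  have h2 : HasDerivAt (fun y : ℝ => l * y) l y := hly
  exact ((h1.mul hsin).add (h2.mul hcos)).sub hsin

/-- For `0 < l* ≤ π/6` and `f(x) = (l*/√3)x² sin(l*x) + l*x cos(l*x) - sin(l*x)`,
the derivative equals `l*x sin(l*x)[2/√3 - l* + (1/√3)l*x cot(l*x)]`, is positive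
on `(0,1]`, and consequently `f > 0` on `(0,1]`. -/
theorem aux_function_positive
    (l : ℝ) (hl : 0 < l) (hl' : l ≤ π / 6) :
    ∀ x : ℝ, 0 < x → x ≤ 1 →
      (HasDerivAt (fun y : ℝ =>
          (l / Real.sqrt 3) * y ^ 2 * Real.sin (l * y) + l * y * Real.cos (l * y)
            - Real.sin (l * y))
        (l * x * Real.sin (l * x) *
          (2 / Real.sqrt 3 - l +
            (1 / Real.sqrt 3) * l * x * (Real.cos (l * x) / Real.sin (l * x)))) x ∧
       0 < l * x * Real.sin (l * x) *
          (2 / Real.sqrt 3 - l +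
            (1 / Real.sqrt 3) * l * x * (Real.cos (l * x) / Real.sin (l * x)))) ∧
      0 < (l / Real.sqrt 3) * x ^ 2 * Real.sin (l * x) + l * x * Real.cos (l * x)
            - Real.sin (l * x) := by
  have hpi := Real.pi_pos
  have hpi4 := Real.pi_le_four
  have h3 : (0:ℝ) < Real.sqrt 3 := Real.sqrt_pos.2 (by norm_num)
  have h3sq : Real.sqrt 3 ^ 2 = 3 := Real.sq_sqrt (by norm_num)
  have h3lt : Real.sqrt 3 < 3 := by nlinarith
  have hl2 : l < 2 / Real.sqrt 3 := by
    rw [lt_div_iff₀ h3]; nlinarith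
  -- basic trig facts on (0,1]
  have hsin : ∀ y : ℝ, 0 < y → y ≤ 1 → 0 < Real.sin (l * y) := by
    intro y hy hy1
    apply Real.sin_pos_of_pos_of_lt_pi (mul_pos hl hy)
    nlinarith
  have hcos : ∀ y : ℝ, 0 < y → y ≤ 1 → 0 < Real.cos (l * y) := by
    intro y hy hy1
    apply Real.cos_pos_of_mem_Ioo
    constructor <;> nlinarith
  -- positivity of the raw derivative expression
  have hpos : ∀ y : ℝ, 0 < y → y ≤ 1 →
      0 < (l / Real.sqrt 3) * (2 * y) * Real.sin (l * y)
        + (l / Real.sqrt 3) * y ^ 2 * (Real.cos (l * y) * l)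
        + (l * Real.cos (l * y) + l * y * (-Real.sin (l * y) * l))
        - Real.cos (l * y) * l := by
    intro y hy hy1
    have hs := hsin y hy hy1
    have hc := hcos y hy hy1
    have h1 : 0 < (2 / Real.sqrt 3 - l) * (l * y * Real.sin (l * y)) := by
      apply mul_pos (by linarith) (by positivity)
    have h2 : 0 < (l / Real.sqrt 3) * y ^ 2 * (Real.cos (l * y) * l) := by positivity
    have heq : (l / Real.sqrt 3) * (2 * y) * Real.sin (l * y)
        + (l / Real.sqrt 3) * y ^ 2 * (Real.cos (l * y) * l)
        + (l * Real.cos (l * y) + l * y * (-Real.sin (l * y) * l))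
        - Real.cos (l * y) * l
        = (2 / Real.sqrt 3 - l) * (l * y * Real.sin (l * y))
          + (l / Real.sqrt 3) * y ^ 2 * (Real.cos (l * y) * l) := by
      field_simp
      ring
    rw [heq]; linarith
  intro x hx hx1
  have hs := hsin x hx hx1
  have hc := hcos x hx hx1
  -- the claimed derivative equals the raw one
  have heq : (l / Real.sqrt 3) * (2 * x) * Real.sin (l * x)
      + (l / Real.sqrt 3) * x ^ 2 * (Real.cos (l * x) * l)
      + (l * Real.cos (l * x) + l * x * (-Real.sin (l * x) * l))
      - Real.cos (l * x) * l
      = l * x * Real.sin (l * x) *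
        (2 / Real.sqrt 3 - l +
          (1 / Real.sqrt 3) * l * x * (Real.cos (l * x) / Real.sin (l * x))) := by
    field_simp
    ring
  have hda := aux_deriv l x
  refine ⟨⟨heq ▸ hda, heq ▸ hpos x hx hx1⟩, ?_⟩
  -- strict monotonicity on [0,1]
  have hmono : StrictMonoOn (fun y : ℝ =>
      (l / Real.sqrt 3) * y ^ 2 * Real.sin (l * y) + l * y * Real.cos (l * y)
        - Real.sin (l * y)) (Set.Icc 0 1) := by
    apply strictMonoOn_of_deriv_pos (convex_Icc 0 1)
    · apply Continuous.continuousOn; fun_prop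
    · intro y hy
      rw [interior_Icc] at hy
      rw [(aux_deriv l y).deriv]
      exact hpos y hy.1 (le_of_lt hy.2)
  have h0 : ((l / Real.sqrt 3) * (0:ℝ) ^ 2 * Real.sin (l * 0) + l * 0 * Real.cos (l * 0)
      - Real.sin (l * 0)) = 0 := by simp
  have := hmono (Set.mem_Icc.2 ⟨le_refl 0, by norm_num⟩)
    (Set.mem_Icc.2 ⟨le_of_lt hx, hx1⟩) hx
  simpa [h0] using this
end

section
/- For 0 < l* ≤ π/6 and 0 < x ≤ 1: (l*/√3)x² + l*x·cot(l*x) - 1 > 0. -/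
open Real

/-- For `0 < l* ≤ π/6` and `0 < x ≤ 1`: `(l*/√3)x² + l*x·cot(l*x) - 1 > 0`. -/
theorem cot_inequality
    (l x : ℝ) (hl : 0 < l) (hl' : l ≤ π / 6) (hx : 0 < x) (hx' : x ≤ 1) :
    0 < (l / Real.sqrt 3) * x ^ 2 + l * x * (Real.cos (l * x) / Real.sin (l * x)) - 1 := by
  set t := l * x with htdef
  have ht : 0 < t := mul_pos hl hx
  have hpi : π ≤ 4 := Real.pi_le_four
  have ht' : t ≤ π / 6 := by
    calc t ≤ l * 1 := by nlinarith
    _ ≤ π / 6 := by linarith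
  have htpi : t < π := by nlinarith [Real.pi_gt_three]
  have hsin : 0 < Real.sin t := Real.sin_pos_of_pos_of_lt_pi ht htpi
  have hsinle : Real.sin t ≤ t := Real.sin_le ht.le
  have hcos : 1 - t ^ 2 / 2 < Real.cos t := Real.one_sub_sq_div_two_lt_cos ht.ne'
  have hcos0 : 0 ≤ Real.cos t := by
    apply Real.cos_nonneg_of_mem_Icc
    constructor <;> nlinarith [Real.pi_gt_three]
  have hdiv : Real.cos t ≤ t * (Real.cos t / Real.sin t) := by
    rw [mul_div_assoc'] 
    rw [le_div_iff₀ hsin]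
    nlinarith
  have hs3 : Real.sqrt 3 ≤ 2 := by
    rw [show (2:ℝ) = Real.sqrt 4 by rw [show (4:ℝ) = 2^2 by norm_num, Real.sqrt_sq]; norm_num]
    exact Real.sqrt_le_sqrt (by norm_num)
  have hs3' : 0 < Real.sqrt 3 := Real.sqrt_pos.mpr (by norm_num)
  have key : (l * x) ^ 2 / 2 ≤ (l / Real.sqrt 3) * x ^ 2 := by
    rw [div_mul_eq_mul_div, le_div_iff₀ hs3']
    have hl4 : l ≤ 2 / 3 := by linarith
    nlinarith [mul_nonneg (mul_nonneg (sub_nonneg.mpr hl4) (sq_nonneg x)) hs3'.le,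
      mul_nonneg (mul_nonneg hl.le (sq_nonneg x)) (sub_nonneg.mpr hs3),
      mul_nonneg hl.le (sq_nonneg x)]
  nlinarith
end

section
/- Let 0 < l* ≤ π/6. For all x > 0, ((l*/√3)x² - l*x + 1)e^{2l*x} - (l*/√3)x² - l*x - 1 > (2/√3) l*² x³ (l*x - √3 l* + 1), and the right-hand side is positive (since l*x - √3 l* + 1 ≥ 1 - √3π/6 > 0 for x > 0). -/
open Real

/-- For `0 < l* ≤ π/6` and `x > 0`:
`((l*/√3)x² - l*x + 1)e^{2l*x} - (l*/√3)x² - l*x - 1 > (2/√3)l*²x³(l*x - √3l* + 1)`,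
and the right-hand side is positive. -/
theorem exp_determinant_bound
    (l x : ℝ) (hl : 0 < l) (hl' : l ≤ π / 6) (hx : 0 < x) :
    ((l / Real.sqrt 3) * x ^ 2 - l * x + 1) * Real.exp (2 * l * x)
        - (l / Real.sqrt 3) * x ^ 2 - l * x - 1 >
      (2 / Real.sqrt 3) * l ^ 2 * x ^ 3 * (l * x - Real.sqrt 3 * l + 1) ∧
    0 < (2 / Real.sqrt 3) * l ^ 2 * x ^ 3 * (l * x - Real.sqrt 3 * l + 1) := by
  have hs3 : (Real.sqrt 3) ^ 2 = 3 := Real.sq_sqrt (by norm_num)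
  have hs3pos : 0 < Real.sqrt 3 := Real.sqrt_pos.mpr (by norm_num)
  have hpi : π < 3.15 := by
    have := Real.pi_lt_d2
    linarith
  have hs3lb : (1.7 : ℝ) < Real.sqrt 3 := by nlinarith
  -- √3 * l < 1
  have hls3 : Real.sqrt 3 * l < 1 := by nlinarith
  have hfac : 0 < l * x - Real.sqrt 3 * l + 1 := by nlinarith
  have hrhs : 0 < (2 / Real.sqrt 3) * l ^ 2 * x ^ 3 * (l * x - Real.sqrt 3 * l + 1) := by
    positivity
  refine ⟨?_, hrhs⟩
  set s := 2 * l * x with hs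
  have hspos : 0 < s := by positivity
  have hexp : 1 + s + s ^ 2 / 2 < Real.exp s := by
    have h4 := Real.sum_le_exp_of_nonneg hspos.le 4
    have : ∑ i ∈ Finset.range 4, s ^ i / (Nat.factorial i) =
        1 + s + s ^ 2 / 2 + s ^ 3 / 6 := by
      simp [Finset.sum_range_succ, Nat.factorial]
    nlinarith [pow_pos hspos 3]
  have hA : 0 < (l / Real.sqrt 3) * x ^ 2 - l * x + 1 := by
    have h : 0 < l * x ^ 2 - Real.sqrt 3 * (l * x) + Real.sqrt 3 := by
      nlinarith [sq_nonneg (x - Real.sqrt 3 / 2)]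
    have heq : (l / Real.sqrt 3) * x ^ 2 - l * x + 1 =
        (l * x ^ 2 - Real.sqrt 3 * (l * x) + Real.sqrt 3) / Real.sqrt 3 := by
      field_simp
    rw [heq]
    exact div_pos h hs3pos
  have key : ((l / Real.sqrt 3) * x ^ 2 - l * x + 1) * (Real.exp s - (1 + s + s ^ 2 / 2)) =
      (((l / Real.sqrt 3) * x ^ 2 - l * x + 1) * Real.exp (2 * l * x)
        - (l / Real.sqrt 3) * x ^ 2 - l * x - 1)
      - (2 / Real.sqrt 3) * l ^ 2 * x ^ 3 * (l * x - Real.sqrt 3 * l + 1) := by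
    rw [hs]
    field_simp
    nlinarith [hs3, sq_nonneg (Real.exp (2*l*x))]
  have := mul_pos hA (sub_pos.mpr hexp)
  linarith [key ▸ this]
end

section
/- For 0 < l* ≤ π/6 there exists C₀ > 0 such that for all x > 0: 4·((x²+1)/x³)·[((l*/√3)x² - l*x + 1)e^{2l*x} - (l*/√3)x² - l*x - 1] ≥ C₀. -/
open Real

/-- Cubic Taylor lower bound for exp. -/
lemma exp_cubic_lb {y : ℝ} (hy : 0 ≤ y) :
    1 + y + y ^ 2 / 2 + y ^ 3 / 6 ≤ Real.exp y := by
  have h := Real.sum_le_exp_of_nonneg hy 4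
  simp [Finset.sum_range_succ, Nat.factorial] at h
  nlinarith [h]

/-- For `0 < l* ≤ π/6` there is `C₀ > 0` bounding below the zeroth-order term
of the Case II determinant for all `x > 0`. -/
theorem determinant_uniform_lower_bound
    (l : ℝ) (hl : 0 < l) (hl' : l ≤ π / 6) :
    ∃ C₀ : ℝ, 0 < C₀ ∧ ∀ x : ℝ, 0 < x →
      4 * ((x ^ 2 + 1) / x ^ 3) *
        (((l / Real.sqrt 3) * x ^ 2 - l * x + 1) * Real.exp (2 * l * x)
          - (l / Real.sqrt 3) * x ^ 2 - l * x - 1) ≥ C₀ := by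
  have hs0 : (0:ℝ) < Real.sqrt 3 := Real.sqrt_pos.mpr (by norm_num)
  set s := Real.sqrt 3 with hs_def
  have hs : s ^ 2 = 3 := Real.sq_sqrt (by norm_num)
  have hs32 : (3:ℝ)/2 ≤ s := by nlinarith
  set a := l / s with ha_def
  have ha_pos : 0 < a := div_pos hl hs0
  have hal : a * s = l := div_mul_cancel₀ l hs0.ne'
  clear hs_def ha_def
  clear_value s a
  have hl2 : l ^ 2 = 3 * a ^ 2 := by
    have : a ^ 2 * s ^ 2 = l ^ 2 := by rw [← mul_pow, hal]
    nlinarith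
  have hl23 : l ≤ 2/3 := by
    have := Real.pi_le_four
    linarith
  have ha_half : a ≤ 1/2 := by nlinarith
  refine ⟨8 * l * a * (1 - a), by nlinarith, ?_⟩
  intro x hx
  set E := Real.exp (2 * l * x) with hE_def
  have hP : (0:ℝ) ≤ a * x ^ 2 - l * x + 1 := by
    nlinarith [sq_nonneg (2*a*x - l), sq_nonneg x, mul_pos ha_pos hx]
  have hE : 1 + 2*l*x + (2*l*x) ^ 2 / 2 + (2*l*x) ^ 3 / 6 ≤ E :=
    exp_cubic_lb (by positivity)
  have hE' : 1 + 2*l*x + 6*a^2*x^2 + 4*a^2*l*x^3 ≤ E := by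
    have heq : 1 + 2*l*x + 6*a^2*x^2 + 4*a^2*l*x^3
        = 1 + 2*l*x + (2*l*x) ^ 2 / 2 + (2*l*x) ^ 3 / 6 := by
      linear_combination (-2*x^2 - (4/3)*l*x^3) * hl2
    linarith [heq ▸ hE]
  have hPE : (a * x ^ 2 - l * x + 1) * (1 + 2*l*x + 6*a^2*x^2 + 4*a^2*l*x^3)
      ≤ (a * x ^ 2 - l * x + 1) * E := mul_le_mul_of_nonneg_left hE' hP
  have hl2x2 : l ^ 2 * x ^ 2 = 3 * (a ^ 2 * x ^ 2) := by rw [hl2]; ring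
  have h4 : 0 ≤ 6*a^3*(1-2*a)*x^4 := by
    have : (0:ℝ) ≤ 1 - 2*a := by linarith
    positivity
  have h5 : 0 ≤ 4*a^3*l*x^5 := by positivity
  have hG : 2*a*l*(1-a)*x^3 ≤
      (a * x ^ 2 - l * x + 1) * E - a * x ^ 2 - l * x - 1 := by
    nlinarith [hPE, h4, h5, hl2x2]
  have hc : 0 ≤ 2*a*l*(1-a)*x^3 := by
    have : (0:ℝ) ≤ 1 - a := by linarith
    positivity
  have hGpos : 0 ≤ (a * x ^ 2 - l * x + 1) * E - a * x ^ 2 - l * x - 1 :=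
    le_trans hc hG
  have hx3 : (0:ℝ) < x ^ 3 := by positivity
  rw [ge_iff_le, show 4 * ((x ^ 2 + 1) / x ^ 3) *
      ((a * x ^ 2 - l * x + 1) * E - a * x ^ 2 - l * x - 1)
      = (4 * (x ^ 2 + 1) * ((a * x ^ 2 - l * x + 1) * E - a * x ^ 2 - l * x - 1)) / x ^ 3
      from by ring, le_div_iff₀ hx3]
  nlinarith [hG, hc, mul_nonneg (sq_nonneg x) hGpos]
end

section
/- Suppose 0 < l* ≤ π/6 and (tan(l*) + √3)·L* < 4 with L* > 0. Then the equation x·tan(l*·x) = 2√(1-x²)·(z+1)/(z-1) - √3, where z = e^{L*√(1-x²)}, has no solution x ∈ (0,1). -/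
open Real

/-!
For `0 < x < 1` the left-hand side satisfies `x tan(l x) < tan l`. On the right, with
`t = L √(1 - x²)`, the inequality `(eᵗ + 1)/(eᵗ - 1) > 2/t` (that is, `tanh u < u` for `u = t/2`)
bounds the right-hand side below by `4/L - √3`, which exceeds `tan l` by hypothesis.
-/

namespace Real

lemma one_sub_mul_exp_lt_one {t : ℝ} (ht : t ≠ 0) : (1 - t) * exp t < 1 := by
  have h := add_one_lt_exp (neg_ne_zero.2 ht)
  have h' := mul_lt_mul_of_pos_right h (exp_pos t)
  rwa [← exp_add, neg_add_cancel, exp_zero, neg_add_eq_sub] at h'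

lemma two_mul_exp_sub_one_lt {t : ℝ} (ht : 0 < t) : 2 * (exp t - 1) < t * (exp t + 1) := by
  let f : ℝ → ℝ := fun u ↦ u * (exp u + 1) - 2 * (exp u - 1)
  have hf : StrictMonoOn f (Set.Ici 0) := by
    refine strictMonoOn_of_deriv_pos (convex_Ici 0) (by fun_prop) fun u hu ↦ ?_
    rw [interior_Ici] at hu
    have hd : HasDerivAt f (1 - (1 - u) * exp u) u :=
      (((hasDerivAt_id' u).mul ((hasDerivAt_exp u).add_const 1)).sub
        (((hasDerivAt_exp u).sub_const 1).const_mul 2)).congr_deriv (by ring)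
    rw [hd.deriv, sub_pos]
    exact one_sub_mul_exp_lt_one (ne_of_gt hu)
  have := hf Set.self_mem_Ici (Set.mem_Ici.2 ht.le) ht
  simp only [f, zero_mul, exp_zero, sub_self, mul_zero] at this
  linarith

lemma four_div_lt_two_mul_mul_exp_add_one_div {L s : ℝ} (hL : 0 < L) (hs : 0 < s) :
    4 / L < 2 * s * (exp (L * s) + 1) / (exp (L * s) - 1) := by
  have hLs := mul_pos hL hs
  have hz : 0 < exp (L * s) - 1 := sub_pos.2 (one_lt_exp_iff.2 hLs)
  rw [div_lt_div_iff₀ hL hz]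
  nlinarith [two_mul_exp_sub_one_lt hLs]

lemma mul_tan_mul_lt_tan {l x : ℝ} (hl : 0 < l) (hl' : l < π / 2) (hx : 0 < x) (hx' : x < 1) :
    x * tan (l * x) < tan l := by
  have hlx : l * x < l := mul_lt_of_lt_one_right hl hx'
  have htan_lt : tan (l * x) < tan l :=
    tan_lt_tan_of_nonneg_of_lt_pi_div_two (mul_pos hl hx).le hl' hlx
  have htan_pos : 0 < tan (l * x) :=
    tan_pos_of_pos_of_lt_pi_div_two (mul_pos hl hx) (hlx.trans hl')
  nlinarith

end Real

/-- Case I of the spectral analysis: if `0 < l* ≤ π/6`, `L* > 0` and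
`(tan l* + √3)L* < 4`, then the equation
`x·tan(l*x) = 2√(1-x²)(z+1)/(z-1) - √3` with `z = e^{L*√(1-x²)}`
has no solution `x ∈ (0,1)`. -/
theorem case_I_no_eigenvalue
    (l L : ℝ) (hl : 0 < l) (hl' : l ≤ π / 6) (hL : 0 < L)
    (hcond : (Real.tan l + Real.sqrt 3) * L < 4) :
    ¬ ∃ x : ℝ, 0 < x ∧ x < 1 ∧
      x * Real.tan (l * x) =
        2 * Real.sqrt (1 - x ^ 2) *
            (Real.exp (L * Real.sqrt (1 - x ^ 2)) + 1) /
            (Real.exp (L * Real.sqrt (1 - x ^ 2)) - 1)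
          - Real.sqrt 3 := by
  rintro ⟨x, hx, hx', heq⟩
  have hs : 0 < Real.sqrt (1 - x ^ 2) := Real.sqrt_pos.2 (by nlinarith)
  have hrhs := four_div_lt_two_mul_mul_exp_add_one_div hL hs
  have hlhs := mul_tan_mul_lt_tan hl (hl'.trans_lt (by linarith [pi_pos])) hx hx'
  have hcond' : Real.tan l + Real.sqrt 3 < 4 / L := (lt_div_iff₀ hL).2 hcond
  linarith
end
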